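/- Let X be a finite nonempty set, let Π and P be full-support probability distributions on X with P ≠ Π, and set α = max_{x∈X} P(x)/Π(x) and β = max_{x∈X} Π(x)/P(x) (so that α > 1). Define λ₀ = (D_KL(P‖Π) + D_KL(Π‖P))/(α − 1). Then 0 ≤ λ₀ ≤ (αβ − 1)²/(2αβ(α − 1)). -/

import Mathlib

/-!
The symmetrised divergence is `∑ₓ (P x - Π x) log (P x / Π x)`, a sum of nonnegative terms.
Splitting it at the sign of `P x - Π x` and bounding `log (P/Π) ≤ log α`, `log (Π/P) ≤ log β`
gives `D_KL(P‖Π) + D_KL(Π‖P) ≤ δ log (αβ)`, where `δ = ∑ₓ (P x - Π x)⁺` is the total variation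
distance. Comparing `(P x - Π x)⁺` with the nonnegative quantity `β P x - Π x` gives
`(αβ - 1) δ ≤ (α - 1)(β - 1)`. Finally `log t ≤ sinh (log t) = (t - t⁻¹)/2` for `t ≥ 1`, and
`(α - 1)(β - 1)(αβ + 1) ≤ (αβ - 1)²` because the difference is `β(α - 1)² + α(β - 1)²`.
-/

open Finset

/-- Kullback–Leibler divergence between two (full-support) distributions on a finite set. -/
noncomputable def KLdiv {X : Type*} [Fintype X] (P Q : X → ℝ) : ℝ :=
  ∑ x, P x * Real.log (P x / Q x)

open Real

lemma exists_lt_of_sum_eq_of_ne {ι M : Type*} [Fintype ι] [AddCommMonoid M] [LinearOrder M]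
    [IsOrderedCancelAddMonoid M] {f g : ι → M} (hsum : ∑ i, f i = ∑ i, g i) (hne : f ≠ g) :
    ∃ i, g i < f i := by
  by_contra! h
  exact hne (funext fun i ↦ (sum_eq_sum_iff_of_le fun i _ ↦ h i).1 hsum i (mem_univ i))

lemma Real.log_le_half_sub_inv {t : ℝ} (ht : 1 ≤ t) : log t ≤ (t - t⁻¹) / 2 :=
  (self_le_sinh_iff.2 (log_nonneg ht)).trans_eq (sinh_log (by linarith))

lemma sub_mul_log_div_nonneg {p q : ℝ} (hp : 0 < p) (hq : 0 < q) :
    0 ≤ (p - q) * log (p / q) := by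
  rw [log_div hp.ne' hq.ne']
  rcases le_total q p with h | h
  · exact mul_nonneg (sub_nonneg.2 h) (sub_nonneg.2 (log_le_log hq h))
  · exact mul_nonneg_of_nonpos_of_nonpos (sub_nonpos.2 h) (sub_nonpos.2 (log_le_log hp h))

lemma sub_mul_log_div_eq_max (p q : ℝ) :
    (p - q) * log (p / q) = max (p - q) 0 * log (p / q) + max (q - p) 0 * log (q / p) := by
  rw [← inv_div p q, log_inv]
  rcases le_total q p with h | h
  · rw [max_eq_left (sub_nonneg.2 h), max_eq_right (sub_nonpos.2 h)]; ring
  · rw [max_eq_right (sub_nonpos.2 h), max_eq_left (sub_nonneg.2 h)]; ring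

lemma max_sub_zero_mul_le {p q a b : ℝ} (ha : 1 ≤ a) (hb : 1 ≤ b)
    (hpq : p ≤ a * q) (hqp : q ≤ b * p) :
    (a * b - 1) * max (p - q) 0 ≤ (a - 1) * (b * p - q) := by
  rcases le_total q p with h | h
  · rw [max_eq_left (sub_nonneg.2 h)]
    nlinarith
  · rw [max_eq_right (sub_nonpos.2 h)]
    nlinarith

section Distributions

variable {X : Type*} [Fintype X] {p q : X → ℝ}

lemma KLdiv_add_KLdiv (p q : X → ℝ) :
    KLdiv p q + KLdiv q p = ∑ x, (p x - q x) * log (p x / q x) := by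
  simp only [KLdiv, ← sum_add_distrib]
  refine sum_congr rfl fun x _ ↦ ?_
  rw [← inv_div (p x), log_inv]
  ring

lemma KLdiv_add_KLdiv_nonneg (hp : ∀ x, 0 < p x) (hq : ∀ x, 0 < q x) :
    0 ≤ KLdiv p q + KLdiv q p := by
  rw [KLdiv_add_KLdiv]
  exact sum_nonneg fun x _ ↦ sub_mul_log_div_nonneg (hp x) (hq x)

lemma sum_max_sub_zero_comm (hsum : ∑ x, p x = ∑ x, q x) :
    ∑ x, max (p x - q x) 0 = ∑ x, max (q x - p x) 0 := by
  rw [← sub_eq_zero, ← sum_sub_distrib]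
  simp_rw [← neg_sub (p _), max_zero_sub_max_neg_zero_eq_self]
  rw [sum_sub_distrib, hsum, sub_self]

variable {a b : ℝ}

lemma KLdiv_add_KLdiv_le_sum_max_mul_log (hp : ∀ x, 0 < p x) (hq : ∀ x, 0 < q x)
    (hpq : ∀ x, p x ≤ a * q x) (hqp : ∀ x, q x ≤ b * p x) :
    KLdiv p q + KLdiv q p ≤ ∑ x, max (p x - q x) 0 * log a + ∑ x, max (q x - p x) 0 * log b := by
  rw [KLdiv_add_KLdiv, ← sum_add_distrib]
  refine sum_le_sum fun x _ ↦ ?_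
  rw [sub_mul_log_div_eq_max]
  exact add_le_add
    (mul_le_mul_of_nonneg_left (log_le_log (div_pos (hp x) (hq x))
      ((div_le_iff₀ (hq x)).2 (hpq x))) (le_max_right _ _))
    (mul_le_mul_of_nonneg_left (log_le_log (div_pos (hq x) (hp x))
      ((div_le_iff₀ (hp x)).2 (hqp x))) (le_max_right _ _))

lemma mul_sum_max_sub_zero_le (hpsum : ∑ x, p x = 1) (hqsum : ∑ x, q x = 1)
    (ha : 1 ≤ a) (hb : 1 ≤ b) (hpq : ∀ x, p x ≤ a * q x) (hqp : ∀ x, q x ≤ b * p x) :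
    (a * b - 1) * ∑ x, max (p x - q x) 0 ≤ (a - 1) * (b - 1) := by
  calc (a * b - 1) * ∑ x, max (p x - q x) 0
      ≤ ∑ x, (a - 1) * (b * p x - q x) := by
        rw [mul_sum]
        exact sum_le_sum fun x _ ↦ max_sub_zero_mul_le ha hb (hpq x) (hqp x)
    _ = (a - 1) * (b - 1) := by
        rw [← mul_sum, sum_sub_distrib, ← mul_sum, hpsum, hqsum, mul_one]

lemma KLdiv_add_KLdiv_le (hp : ∀ x, 0 < p x) (hq : ∀ x, 0 < q x)
    (hpsum : ∑ x, p x = 1) (hqsum : ∑ x, q x = 1) (ha : 1 ≤ a) (hb : 1 ≤ b)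
    (hpq : ∀ x, p x ≤ a * q x) (hqp : ∀ x, q x ≤ b * p x) :
    KLdiv p q + KLdiv q p ≤ (a * b - 1) ^ 2 / (2 * a * b) := by
  set δ := ∑ x, max (p x - q x) 0
  have hδ : 0 ≤ δ := sum_nonneg fun x _ ↦ le_max_right _ _
  have hswap : ∑ x, max (q x - p x) 0 = δ := sum_max_sub_zero_comm (by rw [hqsum, hpsum])
  have hab : 1 ≤ a * b := one_le_mul_of_one_le_of_one_le ha hb
  have hδ_le := mul_sum_max_sub_zero_le hpsum hqsum ha hb hpq hqp
  calc KLdiv p q + KLdiv q p ≤ δ * log a + δ * log b := by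
        have := KLdiv_add_KLdiv_le_sum_max_mul_log hp hq hpq hqp
        rwa [← sum_mul, ← sum_mul, hswap] at this
    _ = δ * log (a * b) := by rw [log_mul (by positivity) (by positivity)]; ring
    _ ≤ δ * ((a * b - (a * b)⁻¹) / 2) := by gcongr; exact log_le_half_sub_inv hab
    _ = (a * b - 1) * δ * (a * b + 1) / (2 * a * b) := by field_simp; ring
    _ ≤ (a - 1) * (b - 1) * (a * b + 1) / (2 * a * b) := by gcongr
    _ ≤ (a * b - 1) ^ 2 / (2 * a * b) := by
        gcongr
        nlinarith [mul_nonneg (by linarith : (0:ℝ) ≤ b) (sq_nonneg (a - 1)),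
          mul_nonneg (by linarith : (0:ℝ) ≤ a) (sq_nonneg (b - 1))]

end Distributions

section SupRatio

variable {X : Type*} [Fintype X] [Nonempty X] {f g : X → ℝ}

lemma le_sup'_div_mul (hg : ∀ x, 0 < g x) (x : X) :
    f x ≤ univ.sup' univ_nonempty (fun y ↦ f y / g y) * g x :=
  (div_le_iff₀ (hg x)).1 (le_sup' (fun y ↦ f y / g y) (mem_univ x))

lemma one_lt_sup'_div (hg : ∀ x, 0 < g x) (hsum : ∑ x, f x = ∑ x, g x) (hne : f ≠ g) :
    1 < univ.sup' univ_nonempty (fun x ↦ f x / g x) := by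
  obtain ⟨x, hx⟩ := exists_lt_of_sum_eq_of_ne hsum hne
  exact ((one_lt_div (hg x)).2 hx).trans_le (le_sup' (fun y ↦ f y / g y) (mem_univ x))

end SupRatio

/-- For full-support distributions `P ≠ Pi`, with
`α = max_x P x / Pi x` and `β = max_x Pi x / P x` (so that `α > 1`), the optimal variance
parameter `λ₀ = (D_KL(P‖Pi) + D_KL(Pi‖P)) / (α - 1)` satisfies
`0 ≤ λ₀ ≤ (αβ - 1)² / (2αβ(α - 1))`. -/
theorem optimal_lambda_bounds {X : Type*} [Fintype X] [Nonempty X]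
    (Pi P : X → ℝ)
    (hPipos : ∀ x, 0 < Pi x) (hPisum : ∑ x, Pi x = 1)
    (hPpos : ∀ x, 0 < P x) (hPsum : ∑ x, P x = 1)
    (hne : P ≠ Pi) :
    1 < univ.sup' univ_nonempty (fun x => P x / Pi x) ∧
    0 ≤ (KLdiv P Pi + KLdiv Pi P)
        / (univ.sup' univ_nonempty (fun x => P x / Pi x) - 1) ∧
    (KLdiv P Pi + KLdiv Pi P)
        / (univ.sup' univ_nonempty (fun x => P x / Pi x) - 1)
      ≤ (univ.sup' univ_nonempty (fun x => P x / Pi x)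
            * univ.sup' univ_nonempty (fun x => Pi x / P x) - 1) ^ 2
        / (2 * univ.sup' univ_nonempty (fun x => P x / Pi x)
            * univ.sup' univ_nonempty (fun x => Pi x / P x)
            * (univ.sup' univ_nonempty (fun x => P x / Pi x) - 1)) := by
  have hα : 1 < univ.sup' univ_nonempty (fun x => P x / Pi x) :=
    one_lt_sup'_div hPipos (hPsum.trans hPisum.symm) hne
  have hβ : 1 < univ.sup' univ_nonempty (fun x => Pi x / P x) :=
    one_lt_sup'_div hPpos (hPisum.trans hPsum.symm) hne.symm
  have hsymm := KLdiv_add_KLdiv_le hPpos hPipos hPsum hPisum hα.le hβ.le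
    (le_sup'_div_mul hPipos) (le_sup'_div_mul hPpos)
  refine ⟨hα, div_nonneg (KLdiv_add_KLdiv_nonneg hPpos hPipos) (sub_pos.2 hα).le, ?_⟩
  rw [← div_div]
  exact div_le_div_of_nonneg_right hsymm (sub_pos.2 hα).le
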